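/- Let V be a real vector space of dimension k + n + kn with Darboux forms ηᴬ = dtᴬ and ωᴬ = Σᵢ dqⁱ ∧ dpᴬᵢ. The kernel of the linear map V^k → V* × M_k(ℝ), (X₁,…,X_k) ↦ (Σ_A i(X_A)ωᴬ, (ηᴬ(X_B))), i.e., the set of k-tuples with ηᴬ(X_B) = 0 for all A,B and Σ_A i(X_A)ωᴬ = 0, is a linear subspace of dimension (k−1)(kn+n). -/
import Mathlib


/-- The model vector space of a k-cosymplectic Darboux chart. -/
abbrev Vkn (k n : ℕ) := (Fin k → ℝ) × (Fin n → ℝ) × (Fin k → Fin n → ℝ)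

/-- Darboux 1-forms ηᴬ = dtᴬ. -/
def etaD (k n : ℕ) (A : Fin k) (v : Vkn k n) : ℝ := v.1 A

/-- Darboux 2-forms ωᴬ = Σᵢ dqⁱ ∧ dpᴬᵢ. -/
def omegaD (k n : ℕ) (A : Fin k) (v w : Vkn k n) : ℝ :=
  ∑ i, (v.2.1 i * w.2.2 A i - w.2.1 i * v.2.2 A i)

def Lmap (k n : ℕ) : (Fin k → Vkn k n) →ₗ[ℝ]
    ((Fin k → Fin k → ℝ) × (Fin k → Fin n → ℝ) × (Fin n → ℝ)) where
  toFun X := (fun B => (X B).1, fun A => (X A).2.1, fun i => ∑ A, (X A).2.2 A i)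
  map_add' X Y := by
    ext <;> simp [Finset.sum_add_distrib]
  map_smul' c X := by
    ext <;> simp [Finset.mul_sum]


/-- The kernel ker ω# ∩ ker η# of the map (X₁,…,X_k) ↦ (Σ_A i(X_A)ωᴬ, (ηᴬ(X_B))) is
a linear subspace of dimension (k−1)(kn+n). -/
theorem kernel_dimension (k n : ℕ) (hk : 0 < k) (hn : 0 < n) :
    ∃ W : Submodule ℝ (Fin k → Vkn k n),
      ((W : Set (Fin k → Vkn k n)) = {X : Fin k → Vkn k n |
        (∀ A B, etaD k n A (X B) = 0) ∧ (∀ v, ∑ A, omegaD k n A (X A) v = 0)}) ∧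
      Module.finrank ℝ W = (k - 1) * (k * n + n) := by
  refine ⟨LinearMap.ker (Lmap k n), ?_, ?_⟩
  · ext X
    simp only [SetLike.mem_coe, LinearMap.mem_ker, Set.mem_setOf_eq, etaD, omegaD,
      Lmap, LinearMap.coe_mk, AddHom.coe_mk, Prod.ext_iff, funext_iff, Pi.zero_apply,
      Prod.fst_zero, Prod.snd_zero]
    constructor
    · rintro ⟨h1, h2, h3⟩
      refine ⟨fun A B => h1 B A, fun v => ?_⟩
      simp only [h2, zero_mul, zero_sub, Finset.sum_neg_distrib, neg_eq_zero]
      rw [Finset.sum_comm]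
      simp [← Finset.mul_sum, h3]
    · rintro ⟨h1, h2⟩
      refine ⟨fun B A => h1 A B, fun A i => ?_, fun i => ?_⟩
      · have := h2 (0, 0, fun B j => if B = A then (if j = i then 1 else 0) else 0)
        simpa [Finset.sum_ite_eq', apply_ite, mul_ite] using this
      · have := h2 (0, fun j => if j = i then 1 else 0, 0)
        simp only [Prod.fst_zero, Prod.snd_zero, Pi.zero_apply, mul_zero, zero_sub,
          ite_mul, one_mul, zero_mul, Finset.sum_neg_distrib, neg_eq_zero,
          Finset.sum_ite_eq', Finset.mem_univ, if_true] at this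
        rw [← this]
  · have h1 := LinearMap.finrank_range_add_finrank_ker (Lmap k n)
    rw [LinearMap.range_eq_top.mpr ?surj, finrank_top] at h1
    case surj =>
      rintro ⟨a, b, c⟩
      refine ⟨fun A => (a A, b A, fun B i =>
        if A = ⟨0, hk⟩ ∧ B = ⟨0, hk⟩ then c i else 0), ?_⟩
      simp only [Lmap, LinearMap.coe_mk, AddHom.coe_mk]
      refine Prod.ext rfl (Prod.ext rfl ?_)
      funext i
      simp [Finset.sum_ite_eq']
    have hd : Module.finrank ℝ (Fin k → Vkn k n) = k * (k + n + k * n) := by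
      simp [Module.finrank_pi_fintype, Module.finrank_prod,
        Module.finrank_fintype_fun_eq_card]
      omega
    have hc : Module.finrank ℝ ((Fin k → Fin k → ℝ) × (Fin k → Fin n → ℝ) × (Fin n → ℝ))
        = k * k + k * n + n := by
      simp [Module.finrank_prod, Module.finrank_pi_fintype,
        Module.finrank_fintype_fun_eq_card]
      ring
    rw [hd, hc] at h1
    have key : (k - 1) * (k * n + n) + (k * k + k * n + n) = k * (k + n + k * n) := by
      cases k with
      | zero => omega
      | succ m =>
        simp only [Nat.succ_sub_one]
        ring
    omega
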